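/- arXiv:1712.08024 — 5 statements merged into one kernel-verified Lean document; each statement's English description precedes it below -/
import Mathlib

section
/- For non-negative integers a, b, c, the quantity H(a)·H(b)·H(c)·H(a+b+c) / (H(a+b)·H(b+c)·H(c+a)) is a positive integer, where H(n) = 0!·1!·2!···(n−1)! is the hyperfactorial. -/
/-!
Legendre's formula, summed over `k < n`, gives `v_p(H(n)) = ∑_{i ≥ 1} S_{pⁱ}(n)` with the floor
sum `S_q(n) = ∑_{k<n} ⌊k/q⌋`, so it suffices that
`S_q(a+b) + S_q(b+c) + S_q(c+a) ≤ S_q(a) + S_q(b) + S_q(c) + S_q(a+b+c)` for every `q > 0`.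
Since `S_q(n + q) = S_q(n) + n`, the defect of this inequality is `q`-periodic in each of
`a, b, c`; for `a, b, c < q` it is elementary because there `S_q(n) = (n - q)⁺ + (n - 2q)⁺`.
-/

/-- The hyperfactorial `H(n) = 0! · 1! · ⋯ · (n-1)!`. -/
def hyperfac (n : ℕ) : ℕ := ∏ k ∈ Finset.range n, k.factorial

open Finset

def floorSum (q n : ℕ) : ℕ := ∑ k ∈ range n, k / q

def floorSumDefect (q a b c : ℕ) : ℤ :=
  floorSum q a + floorSum q b + floorSum q c + floorSum q (a + b + c)
    - floorSum q (a + b) - floorSum q (b + c) - floorSum q (c + a)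

section FloorSum

variable {q : ℕ}

lemma floorSum_of_le {n : ℕ} (h : n ≤ q) : floorSum q n = 0 :=
  sum_eq_zero fun _ hk => Nat.div_eq_of_lt ((mem_range.mp hk).trans_le h)

lemma floorSum_add_self (hq : 0 < q) (n : ℕ) : floorSum q (n + q) = floorSum q n + n := by
  have h : ∀ k, (q + k) / q = k / q + 1 := fun k => by rw [add_comm, Nat.add_div_right k hq]
  rw [floorSum, add_comm, sum_range_add, ← floorSum, floorSum_of_le le_rfl, zero_add]
  simp only [h, sum_add_distrib, sum_const, card_range, smul_eq_mul, mul_one, floorSum]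

lemma floorSum_of_lt_three_mul (hq : 0 < q) {n : ℕ} (h : n < 3 * q) :
    floorSum q n = (n - q) + (n - 2 * q) := by
  rcases lt_or_ge n q with h₁ | h₁
  · rw [floorSum_of_le h₁.le]; omega
  obtain ⟨m, rfl⟩ := Nat.exists_eq_add_of_le' h₁
  rcases lt_or_ge m q with h₂ | h₂
  · rw [floorSum_add_self hq, floorSum_of_le h₂.le]; omega
  obtain ⟨l, rfl⟩ := Nat.exists_eq_add_of_le' h₂
  rw [floorSum_add_self hq, floorSum_add_self hq, floorSum_of_le (by omega)]; omega

lemma floorSumDefect_rotate (a b c : ℕ) :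
    floorSumDefect q a b c = floorSumDefect q b c a := by
  rw [floorSumDefect, floorSumDefect, show b + c + a = a + b + c by ring]; ring

lemma floorSumDefect_add_self (hq : 0 < q) (a b c : ℕ) :
    floorSumDefect q (a + q) b c = floorSumDefect q a b c := by
  rw [floorSumDefect, floorSumDefect, show a + q + b + c = a + b + c + q by ring,
    show a + q + b = a + b + q by ring, show c + (a + q) = c + a + q by ring,
    floorSum_add_self hq, floorSum_add_self hq, floorSum_add_self hq, floorSum_add_self hq]
  push_cast; ring

lemma floorSumDefect_mod_left (hq : 0 < q) (a b c : ℕ) :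
    floorSumDefect q (a % q) b c = floorSumDefect q a b c := by
  conv_rhs => rw [← Nat.mod_add_div' a q]
  induction a / q with
  | zero => simp
  | succ k ih => rw [add_mul, one_mul, ← add_assoc, floorSumDefect_add_self hq, ih]

lemma floorSumDefect_mod (hq : 0 < q) (a b c : ℕ) :
    floorSumDefect q (a % q) (b % q) (c % q) = floorSumDefect q a b c := by
  rw [floorSumDefect_mod_left hq, floorSumDefect_rotate, floorSumDefect_mod_left hq,
    floorSumDefect_rotate, floorSumDefect_mod_left hq, floorSumDefect_rotate]

lemma floorSumDefect_nonneg_of_lt {a b c : ℕ} (ha : a < q) (hb : b < q) (hc : c < q) :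
    0 ≤ floorSumDefect q a b c := by
  have hq : 0 < q := by omega
  rw [floorSumDefect, floorSum_of_le ha.le, floorSum_of_le hb.le, floorSum_of_le hc.le]
  rw [floorSum_of_lt_three_mul hq (n := a + b + c) (by omega),
    floorSum_of_lt_three_mul hq (n := a + b) (by omega),
    floorSum_of_lt_three_mul hq (n := b + c) (by omega),
    floorSum_of_lt_three_mul hq (n := c + a) (by omega)]
  omega

lemma floorSum_add_le (hq : 0 < q) (a b c : ℕ) :
    floorSum q (a + b) + floorSum q (b + c) + floorSum q (c + a) ≤
      floorSum q a + floorSum q b + floorSum q c + floorSum q (a + b + c) := by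
  have h := floorSumDefect_nonneg_of_lt (Nat.mod_lt a hq) (Nat.mod_lt b hq) (Nat.mod_lt c hq)
  rw [floorSumDefect_mod hq, floorSumDefect] at h
  omega

end FloorSum

lemma hyperfac_ne_zero (n : ℕ) : hyperfac n ≠ 0 :=
  prod_ne_zero_iff.mpr fun k _ => k.factorial_ne_zero

lemma factorization_hyperfac {p n b : ℕ} (hp : p.Prime) (hb : Nat.log p n < b) :
    (hyperfac n).factorization p = ∑ i ∈ Ico 1 b, floorSum (p ^ i) n := by
  rw [hyperfac, Nat.factorization_prod fun k _ => k.factorial_ne_zero, Finsupp.finsetSum_apply]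
  simp only [floorSum]
  rw [sum_comm]
  refine sum_congr rfl fun k hk => Nat.factorization_factorial hp ?_
  exact (Nat.log_mono_right (mem_range.mp hk).le).trans_lt hb

lemma hyperfac_dvd (a b c : ℕ) :
    hyperfac (a + b) * hyperfac (b + c) * hyperfac (c + a) ∣
      hyperfac a * hyperfac b * hyperfac c * hyperfac (a + b + c) := by
  refine (Nat.factorization_prime_le_iff_dvd (by simp [hyperfac_ne_zero])
    (by simp [hyperfac_ne_zero])).mp fun p hp => ?_
  have hb : ∀ n ≤ a + b + c, Nat.log p n < Nat.log p (a + b + c) + 1 := fun n hn =>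
    Nat.lt_succ_of_le (Nat.log_mono_right hn)
  simp only [Nat.factorization_mul, hyperfac_ne_zero, mul_ne_zero_iff, ne_eq, not_false_eq_true,
    and_self, Finsupp.add_apply]
  rw [factorization_hyperfac hp (hb a (by omega)), factorization_hyperfac hp (hb b (by omega)),
    factorization_hyperfac hp (hb c (by omega)), factorization_hyperfac hp (hb _ le_rfl),
    factorization_hyperfac hp (hb (a + b) (by omega)),
    factorization_hyperfac hp (hb (b + c) (by omega)),
    factorization_hyperfac hp (hb (c + a) (by omega))]
  simp only [← sum_add_distrib]
  exact sum_le_sum fun i _ => floorSum_add_le (pow_pos hp.pos i) a b c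

/-- MacMahon's quantity `H(a)H(b)H(c)H(a+b+c)/(H(a+b)H(b+c)H(c+a))` is a
positive integer. -/
theorem macmahon_ratio_pos_int (a b c : ℕ) :
    ∃ m : ℕ, 0 < m ∧
      hyperfac a * hyperfac b * hyperfac c * hyperfac (a + b + c) =
        m * (hyperfac (a + b) * hyperfac (b + c) * hyperfac (c + a)) := by
  obtain ⟨m, hm⟩ := hyperfac_dvd a b c
  refine ⟨m, Nat.pos_of_ne_zero fun h => ?_, by rw [hm, mul_comm]⟩
  simp [h, hyperfac_ne_zero] at hm
end

section
/- MacMahon's q-product formula equals ∏_{i=1}^{a} ∏_{j=1}^{b} ∏_{k=1}^{c} (1−q^{i+j+k−1})/(1−q^{i+j+k−2}); that is, H_q(a)H_q(b)H_q(c)H_q(a+b+c)/(H_q(a+b)H_q(b+c)H_q(c+a)) = ∏_{i,j,k} [i+j+k−1]_q/[i+j+k−2]_q, as rational functions in q. -/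
/-- The `q`-integer `[n]_q = 1 + q + ⋯ + q^{n-1}` in `ℚ(q)`. -/
noncomputable def qint (n : ℕ) : RatFunc ℚ := ∑ i ∈ Finset.range n, RatFunc.X ^ i

/-- The `q`-factorial `[n]_q! = ∏_{j=1}^n [j]_q`. -/
noncomputable def qfact (n : ℕ) : RatFunc ℚ := ∏ j ∈ Finset.range n, qint (j + 1)

/-- The `q`-hyperfactorial `H_q(n) = ∏_{k=0}^{n-1} [k]_q!`. -/
noncomputable def qhyperfac (n : ℕ) : RatFunc ℚ := ∏ k ∈ Finset.range n, qfact k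

/-!
Since `1 - q^n = [n]_q (1 - q)`, the factor indexed by `(i, j, k)` is `[i+j+k+2]_q / [i+j+k+1]_q`.
For fixed `i` the product over `j < b, k < c` is `B(i+1) / B(i)` with
`B(s) = ∏_{j<b, k<c} [s+j+k+1]_q`, so the product over `i` telescopes to `B(a) / B(0)`.
Collapsing the shifted products one variable at a time,
`B(s) = H_q(s+b+c) H_q(s) / (H_q(s+b) H_q(s+c))`, which gives the formula.
-/

open Finset

namespace Finset

variable {G₀ : Type*} [CommGroupWithZero G₀]

lemma prod_range_div₀ (f : ℕ → G₀) (hf : ∀ i, f i ≠ 0) (n : ℕ) :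
    ∏ i ∈ range n, f (i + 1) / f i = f n / f 0 := by
  induction n with
  | zero => simp [div_self (hf 0)]
  | succ n ih => rw [prod_range_succ, ih, mul_comm, div_mul_div_cancel₀ (hf n)]

lemma prod_range_add_div_prod_range₀ (f : ℕ → G₀) (n m : ℕ) (h : ∏ k ∈ range n, f k ≠ 0) :
    (∏ k ∈ range (n + m), f k) / ∏ k ∈ range n, f k = ∏ k ∈ range m, f (n + k) := by
  rw [prod_range_add, mul_div_cancel_left₀ _ h]

end Finset

lemma qint_mul_X_sub_one (n : ℕ) : qint n * (RatFunc.X - 1) = RatFunc.X ^ n - 1 :=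
  geom_sum_mul _ n

lemma RatFunc.X_pow_sub_one_ne_zero {K : Type*} [Field K] {n : ℕ} (hn : n ≠ 0) :
    (RatFunc.X : RatFunc K) ^ n - 1 ≠ 0 := by
  have h := RatFunc.algebraMap_ne_zero
    (Polynomial.X_pow_sub_C_ne_zero (Nat.pos_of_ne_zero hn) (1 : K))
  simpa [RatFunc.algebraMap_X] using h

lemma qint_ne_zero {n : ℕ} (hn : n ≠ 0) : qint n ≠ 0 := by
  intro h
  have := qint_mul_X_sub_one n
  rw [h, zero_mul] at this
  exact RatFunc.X_pow_sub_one_ne_zero hn this.symm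

lemma one_sub_X_pow_div_one_sub_X_pow (m n : ℕ) :
    (1 - (RatFunc.X : RatFunc ℚ) ^ m) / (1 - RatFunc.X ^ n) = qint m / qint n := by
  have h1 : (1 : RatFunc ℚ) - RatFunc.X ≠ 0 := by
    rw [← neg_ne_zero, neg_sub, ← pow_one RatFunc.X]
    exact RatFunc.X_pow_sub_one_ne_zero one_ne_zero
  have hq (k : ℕ) : 1 - (RatFunc.X : RatFunc ℚ) ^ k = qint k * (1 - RatFunc.X) := by
    linear_combination qint_mul_X_sub_one k
  rw [hq, hq, mul_div_mul_right _ _ h1]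

lemma qfact_ne_zero (n : ℕ) : qfact n ≠ 0 :=
  prod_ne_zero_iff.2 fun _ _ => qint_ne_zero (Nat.succ_ne_zero _)

lemma qhyperfac_ne_zero (n : ℕ) : qhyperfac n ≠ 0 :=
  prod_ne_zero_iff.2 fun k _ => qfact_ne_zero k

lemma qfact_add_div_qfact (m n : ℕ) :
    qfact (m + n) / qfact m = ∏ k ∈ range n, qint (m + k + 1) :=
  prod_range_add_div_prod_range₀ _ m n (qfact_ne_zero m)

lemma qhyperfac_add_div_qhyperfac (m n : ℕ) :
    qhyperfac (m + n) / qhyperfac m = ∏ k ∈ range n, qfact (m + k) :=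
  prod_range_add_div_prod_range₀ _ m n (qhyperfac_ne_zero m)

noncomputable def qbox (b c s : ℕ) : RatFunc ℚ :=
  ∏ j ∈ range b, ∏ k ∈ range c, qint (s + j + k + 1)

lemma qbox_ne_zero (b c s : ℕ) : qbox b c s ≠ 0 :=
  prod_ne_zero_iff.2 fun _ _ => prod_ne_zero_iff.2 fun _ _ => qint_ne_zero (Nat.succ_ne_zero _)

lemma qbox_eq_qhyperfac (b c s : ℕ) :
    qbox b c s = qhyperfac (s + b + c) * qhyperfac s / (qhyperfac (s + b) * qhyperfac (s + c)) := by
  have hrow : qbox b c s = ∏ j ∈ range b, qfact (s + j + c) / qfact (s + j) := by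
    simp only [qbox, qfact_add_div_qfact]
  have hshift : ∏ j ∈ range b, qfact (s + j + c) = qhyperfac (s + c + b) / qhyperfac (s + c) := by
    rw [qhyperfac_add_div_qhyperfac]
    exact prod_congr rfl fun j _ => by rw [add_right_comm]
  rw [hrow, prod_div_distrib, hshift, ← qhyperfac_add_div_qhyperfac, add_right_comm s c b]
  field_simp [qhyperfac_ne_zero]

lemma prod_qint_succ_div_qint_eq_qbox_div (b c s : ℕ) :
    ∏ j ∈ range b, ∏ k ∈ range c, qint (s + j + k + 2) / qint (s + j + k + 1) =
      qbox b c (s + 1) / qbox b c s := by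
  simp only [qbox, prod_div_distrib]
  congr! 4 with j _ k _
  omega

/-- MacMahon's `q`-product formula: as rational functions in `q`,
`H_q(a)H_q(b)H_q(c)H_q(a+b+c)/(H_q(a+b)H_q(b+c)H_q(c+a)) =
∏_{i=1}^a ∏_{j=1}^b ∏_{k=1}^c (1-q^{i+j+k-1})/(1-q^{i+j+k-2})`
(here `i, j, k` run over `1,…,a` etc., written via `0`-based indices). -/
theorem macmahon_q_product (a b c : ℕ) :
    qhyperfac a * qhyperfac b * qhyperfac c * qhyperfac (a + b + c) /
        (qhyperfac (a + b) * qhyperfac (b + c) * qhyperfac (c + a)) =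
      ∏ i ∈ Finset.range a, ∏ j ∈ Finset.range b, ∏ k ∈ Finset.range c,
        (1 - (RatFunc.X : RatFunc ℚ) ^ (i + j + k + 2)) /
          (1 - (RatFunc.X : RatFunc ℚ) ^ (i + j + k + 1)) := by
  simp only [one_sub_X_pow_div_one_sub_X_pow, prod_qint_succ_div_qint_eq_qbox_div]
  rw [prod_range_div₀ _ (qbox_ne_zero b c), qbox_eq_qhyperfac, qbox_eq_qhyperfac,
    show qhyperfac 0 = 1 from prod_range_zero _]
  simp only [zero_add, add_comm c a]
  field_simp [qhyperfac_ne_zero]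
end

section
/- Graph-splitting for perfect matchings: let G be a finite bipartite graph with parts V₁, V₂, and let H be an induced subgraph such that every edge of G joining H to G−H has its H-endpoint in V₁ ∩ H, and H has equally many vertices in V₁ and V₂. Then the number of perfect matchings of G equals the number of perfect matchings of H times the number of perfect matchings of G − H. -/
/-!
Every neighbour of a vertex of `S \ V₁` lies in `S ∩ V₁`, so a perfect matching of `G` maps
`S \ V₁` injectively into `S ∩ V₁`; the two sets have the same finite size, so the map is also
onto. Hence no matching edge leaves `S`, and a perfect matching of `G` is the same thing as a
pair of perfect matchings of `G[S]` and `G[Sᶜ]`.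
-/

namespace SimpleGraph

variable {V : Type*} {G : SimpleGraph V}

namespace Subgraph

theorem IsPerfectMatching.ext_of_adj {M M' : G.Subgraph} (hM : M.IsPerfectMatching)
    (hM' : M'.IsPerfectMatching) (h : ∀ u v, M.Adj u v ↔ M'.Adj u v) : M = M' :=
  Subgraph.ext (hM.2.verts_eq_univ.trans hM'.2.verts_eq_univ.symm)
    (funext₂ fun u v => propext (h u v))

theorem IsPerfectMatching.comap_induce {M : G.Subgraph} (hM : M.IsPerfectMatching) {S : Set V}
    (hS : ∀ u v, M.Adj u v → u ∈ S → v ∈ S) :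
    (M.comap (Embedding.induce S).toHom).IsPerfectMatching := by
  refine isPerfectMatching_iff.mpr fun u => ?_
  obtain ⟨w, huw, huniq⟩ := isPerfectMatching_iff.mp hM u
  exact ⟨⟨w, hS _ _ huw u.2⟩, ⟨M.adj_sub huw, huw⟩, fun y hy => Subtype.ext (huniq y hy.2)⟩

theorem IsSpanning.verts_map_induce {T : Set V} {M : (G.induce T).Subgraph}
    (hM : M.IsSpanning) : (M.map (Embedding.induce T).toHom).verts = T := by
  simp only [map_verts, hM.verts_eq_univ, Set.image_univ]
  exact Subtype.range_coe

theorem IsPerfectMatching.map_induce_sup_map_induce_compl {S : Set V}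
    {M₁ : (G.induce S).Subgraph} {M₂ : (G.induce Sᶜ).Subgraph}
    (h₁ : M₁.IsPerfectMatching) (h₂ : M₂.IsPerfectMatching) :
    (M₁.map (Embedding.induce S).toHom ⊔ M₂.map (Embedding.induce Sᶜ).toHom).IsPerfectMatching := by
  have hm₁ := h₁.1.map (Embedding.induce S).toHom (Embedding.induce (G := G) S).injective
  have hm₂ := h₂.1.map (Embedding.induce Sᶜ).toHom (Embedding.induce (G := G) Sᶜ).injective
  refine ⟨hm₁.sup hm₂ ?_, ?_⟩
  · rw [hm₁.support_eq_verts, hm₂.support_eq_verts, h₁.2.verts_map_induce,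
      h₂.2.verts_map_induce]
    exact disjoint_compl_right
  · rw [isSpanning_iff, verts_sup, h₁.2.verts_map_induce, h₂.2.verts_map_induce,
      Set.union_compl_self]

/-- The matching sends `A` injectively into `B`, hence onto `B` as `|B| ≤ |A|`. -/
theorem IsPerfectMatching.mem_of_adj_of_neighbors_subset {M : G.Subgraph}
    (hM : M.IsPerfectMatching) {A B : Set V} (hAB : ∀ a ∈ A, ∀ w, G.Adj a w → w ∈ B)
    (hB : B.Finite) (hcard : B.ncard ≤ A.ncard) {b w : V} (hb : b ∈ B) (hbw : M.Adj b w) :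
    w ∈ A := by
  choose p hp using fun v => (isPerfectMatching_iff.mp hM v).exists
  obtain ⟨a, ha, rfl⟩ := Set.surj_on_of_inj_on_of_ncard_le (fun a _ => p a)
    (fun a ha => hAB a ha _ (M.adj_sub (hp a)))
    (fun a₁ a₂ _ _ h => hM.1.eq_of_adj_right (hp a₁) (h ▸ hp a₂)) hcard hB b hb
  rwa [hM.1.eq_of_adj_left hbw (hp a).symm]

theorem IsPerfectMatching.mem_of_adj_of_mem {V₁ S : Set V}
    (hbip : ∀ u v, G.Adj u v → (u ∈ V₁ ↔ v ∉ V₁))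
    (hsep : ∀ u v, u ∈ S → v ∉ S → G.Adj u v → u ∈ V₁)
    (hbal : (S ∩ V₁).ncard = (S \ V₁).ncard) (hS : S.Finite)
    {M : G.Subgraph} (hM : M.IsPerfectMatching) {u v : V} (huv : M.Adj u v) (hu : u ∈ S) :
    v ∈ S := by
  have neighbors_mem : ∀ a ∈ S \ V₁, ∀ w, G.Adj a w → w ∈ S ∩ V₁ := fun a ⟨haS, haV⟩ w haw =>
    ⟨by_contra fun hw => haV (hsep a w haS hw haw),
      not_not.mp fun hw => haV ((hbip a w haw).2 hw)⟩
  by_cases huV : u ∈ V₁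
  · exact (hM.mem_of_adj_of_neighbors_subset neighbors_mem
      (hS.subset Set.inter_subset_left) hbal.le ⟨hu, huV⟩ huv).1
  · exact (neighbors_mem u ⟨hu, huV⟩ v (M.adj_sub huv)).1

end Subgraph

open Subgraph in
def perfectMatchingEquivInduceProd (S : Set V) :
    {M : {M : G.Subgraph // M.IsPerfectMatching} // ∀ u v, M.1.Adj u v → u ∈ S → v ∈ S} ≃
      {M : (G.induce S).Subgraph // M.IsPerfectMatching} ×
        {M : (G.induce Sᶜ).Subgraph // M.IsPerfectMatching} where
  toFun M := (⟨M.1.1.comap (Embedding.induce S).toHom, M.1.2.comap_induce M.2⟩,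
    ⟨M.1.1.comap (Embedding.induce Sᶜ).toHom,
      M.1.2.comap_induce fun u v huv hu hv => hu (M.2 v u huv.symm hv)⟩)
  invFun N := ⟨⟨N.1.1.map (Embedding.induce S).toHom ⊔ N.2.1.map (Embedding.induce Sᶜ).toHom,
    N.1.2.map_induce_sup_map_induce_compl N.2.2⟩, by
      rintro u v (⟨a, b, -, rfl, rfl⟩ | ⟨a, b, -, rfl, rfl⟩) hu
      exacts [b.2, absurd hu a.2]⟩
  left_inv M := by
    refine Subtype.ext (Subtype.ext
      (IsPerfectMatching.ext_of_adj (Subtype.property _) M.1.2 fun u v => ?_))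
    constructor
    · rintro (⟨a, b, ⟨-, h⟩, rfl, rfl⟩ | ⟨a, b, ⟨-, h⟩, rfl, rfl⟩) <;> exact h
    · intro h
      by_cases hu : u ∈ S
      · exact Or.inl ⟨⟨u, hu⟩, ⟨v, M.2 u v h hu⟩, ⟨h.adj_sub, h⟩, rfl, rfl⟩
      · exact Or.inr ⟨⟨u, hu⟩, ⟨v, fun hv => hu (M.2 v u h.symm hv)⟩, ⟨h.adj_sub, h⟩, rfl, rfl⟩
  right_inv N := by
    refine Prod.ext
      (Subtype.ext (IsPerfectMatching.ext_of_adj (Subtype.property _) N.1.2 fun u v => ?_))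
      (Subtype.ext (IsPerfectMatching.ext_of_adj (Subtype.property _) N.2.2 fun u v => ?_))
    · simpa [Relation.Map] using fun h => h.adj_sub
    · have hu : (u : V) ∉ S := u.2
      have hv : (v : V) ∉ S := v.2
      simpa [Relation.Map, hu, hv] using fun h => h.adj_sub

end SimpleGraph

/-- Graph-splitting lemma for perfect matchings: if `G` is a finite bipartite
graph with parts `V₁` and its complement, and `S` induces a subgraph `H` such
that every edge of `G` joining `S` to its complement has its `S`-endpoint in
`V₁`, and `S` contains equally many vertices of the two parts, then the number
of perfect matchings of `G` is the product of the numbers of perfect matchings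
of the two induced subgraphs `H = G[S]` and `G - H = G[Sᶜ]`. -/
theorem matching_splitting {V : Type*} [Fintype V] (G : SimpleGraph V)
    (V₁ : Set V) (hbip : ∀ u v, G.Adj u v → (u ∈ V₁ ↔ v ∉ V₁))
    (S : Set V)
    (hsep : ∀ u v, u ∈ S → v ∉ S → G.Adj u v → u ∈ V₁)
    (hbal : (S ∩ V₁).ncard = (S \ V₁).ncard) :
    Nat.card {M : G.Subgraph // M.IsPerfectMatching} =
      Nat.card {M : (SimpleGraph.induce S G).Subgraph // M.IsPerfectMatching} *
        Nat.card {M : (SimpleGraph.induce Sᶜ G).Subgraph // M.IsPerfectMatching} := by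
  have no_edge_leaves_S (M : {M : G.Subgraph // M.IsPerfectMatching}) :
      ∀ u v, M.1.Adj u v → u ∈ S → v ∈ S := fun _ _ =>
    M.2.mem_of_adj_of_mem hbip hsep hbal S.toFinite
  rw [← Nat.card_prod, ← Nat.card_congr (SimpleGraph.perfectMatchingEquivInduceProd S),
    Nat.card_congr (Equiv.subtypeUnivEquiv no_edge_leaves_S)]
end

section
/- Symmetry of the exponent functions: A^{(2)}_{x,y,z,t}(a;b) = A^{(1)}_{t,y,z,x}(b;a) for all non-negative integers x,y,z,t and all finite sequences a, b of non-negative integers. -/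
open Finset

/-- The bracket symbol `⟨b,a⟩ = (a+1) + (a+2) + ⋯ + b`. -/
def brk (b a : ℕ) : ℕ := ∑ k ∈ Finset.Icc (a + 1) b, k

/-- Sum of odd-indexed entries `a₁ + a₃ + ⋯` of a `1`-indexed sequence of
length `m`. -/
def oddSum (m : ℕ) (a : ℕ → ℕ) : ℕ := ∑ i ∈ range ((m + 1) / 2), a (2 * i + 1)

/-- Sum of even-indexed entries `a₂ + a₄ + ⋯` of a `1`-indexed sequence of
length `m`. -/
def evenSum (m : ℕ) (a : ℕ → ℕ) : ℕ := ∑ i ∈ range (m / 2), a (2 * i + 2)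

/-- The exponent `A⁽¹⁾_{x,y,z,t}(a;b)` of equation (6.11), for `1`-indexed
sequences `a = (a₁,…,a_m)`, `b = (b₁,…,b_n)`. -/
def A1 (x y z t m n : ℕ) (a b : ℕ → ℕ) : ℕ :=
  let oa := oddSum m a; let ea := evenSum m a
  let ob := oddSum n b; let eb := evenSum n b
  let Δ := x + y + t + ea + eb
  (∑ i ∈ range ((m + 1) / 2),
      a (2 * i + 1) * brk (x + ∑ j ∈ range i, a (2 * j + 2)) 0) +
  z * brk (x + y + ea) 0 +
  (∑ i ∈ range ((n + 1) / 2),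
      b (2 * i + 1) * brk (x + y + ea + eb - ∑ j ∈ range i, b (2 * j + 2)) 0) +
  (∑ i ∈ range (m / 2),
      a (2 * i + 2) * brk (Δ + y + oa + ob - ∑ j ∈ range (i + 1), a (2 * j + 1)) Δ) +
  z * brk (Δ + ob) Δ +
  (∑ i ∈ range (n / 2),
      b (2 * i + 2) * brk (Δ + ∑ j ∈ range (i + 1), b (2 * j + 1)) Δ)

/-- The exponent `A⁽²⁾_{x,y,z,t}(a;b)` of equation (6.12). -/
def A2 (x y z t m n : ℕ) (a b : ℕ → ℕ) : ℕ :=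
  let oa := oddSum m a; let ea := evenSum m a
  let ob := oddSum n b; let eb := evenSum n b
  let Δ := x + y + t + ea + eb
  (∑ i ∈ range ((m + 1) / 2),
      a (2 * i + 1) * brk (y + t + ea + eb - ∑ j ∈ range i, a (2 * j + 2)) 0) +
  z * brk (y + t + eb) 0 +
  (∑ i ∈ range ((n + 1) / 2),
      b (2 * i + 1) * brk (t + ∑ j ∈ range i, b (2 * j + 2)) 0) +
  (∑ i ∈ range (m / 2),
      a (2 * i + 2) * brk (Δ + ∑ j ∈ range (i + 1), a (2 * j + 1)) Δ) +
  z * brk (Δ + oa) Δ +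
  (∑ i ∈ range (n / 2),
      b (2 * i + 2) * brk (Δ + y + oa + ob - ∑ j ∈ range (i + 1), b (2 * j + 1)) Δ)

/-- Symmetry of the exponent functions:
`A⁽²⁾_{x,y,z,t}(a;b) = A⁽¹⁾_{t,y,z,x}(b;a)`. -/
theorem A2_eq_A1_swap (x y z t m n : ℕ) (a b : ℕ → ℕ) :
    A2 x y z t m n a b = A1 t y z x n m b a := by
  -- The six summands match pairwise; their bracket arguments agree only up to reordering
  -- additions, and they contain truncated subtractions, so `ring_nf` must normalize inside them.
  simp only [A1, A2]
  ring_nf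
end

section
/- Exponent recurrence: A^{(1)}_{x,y,z,t}(a;b) + A^{(1)}_{x−1,y+1,z−1,t−1}(a;b) = A^{(1)}_{x,y+1,z−1,t−1}(a;b) + A^{(1)}_{x−1,y,z,t}(a;b) + x + y − z + 1, for all integers x,t ≥ 1, y ≥ 0, z ≥ 1 and all sequences a, b of non-negative integers. -/
/-!
Write `⟨b,a⟩ = tri b - tri a` with `tri u = u (u + 1) / 2` and regard `A⁽¹⁾` as a function of
`x`, `y`, `z` and `Δ`; the four evaluations in the recurrence have
`(x, y, z, Δ)`, `(x-1, y+1, z-1, Δ-1)`, `(x, y+1, z-1, Δ)`, `(x-1, y, z, Δ-1)`.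
In the alternating sum of the six groups of terms, those depending on `x` alone or on `Δ` alone
cancel, those depending on `x + y` or on `Δ + y` give minus a second difference of `tri`, namely
`-o_b` and `-e_a`, and the two `z`-terms give `x + y + e_a - z + 1` and `o_b`.
-/

open Finset

/-- The triangular number `⟨u,0⟩ = 1 + 2 + ⋯ + u`, as a polynomial in `u`. -/
def tri (u : ℚ) : ℚ := u * (u + 1) / 2

theorem tri_add_one_add_tri_sub_one (u : ℚ) : tri (u + 1) + tri (u - 1) = 2 * tri u + 1 := by
  unfold tri; ring

theorem brk_succ {a b : ℕ} (h : a ≤ b) : brk (b + 1) a = brk b a + (b + 1) :=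
  Finset.sum_Icc_succ_top (by omega) _

theorem cast_brk {a b : ℕ} (h : a ≤ b) : (brk b a : ℚ) = tri b - tri a := by
  induction b, h using Nat.le_induction with
  | base => simp [brk]
  | succ b hab ih =>
    rw [brk_succ hab]
    push_cast
    rw [ih]
    unfold tri; ring

theorem sum_range_le_oddSum {i m : ℕ} (a : ℕ → ℕ) (h : i ≤ (m + 1) / 2) :
    ∑ j ∈ range i, a (2 * j + 1) ≤ oddSum m a :=
  sum_le_sum_of_subset (range_subset_range.2 h)

theorem sum_range_le_evenSum {i n : ℕ} (b : ℕ → ℕ) (h : i ≤ n / 2) :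
    ∑ j ∈ range i, b (2 * j + 2) ≤ evenSum n b :=
  sum_le_sum_of_subset (range_subset_range.2 h)

theorem cast_oddSum (m : ℕ) (a : ℕ → ℕ) :
    (oddSum m a : ℚ) = ∑ i ∈ range ((m + 1) / 2), (a (2 * i + 1) : ℚ) := by
  simp [oddSum]

theorem cast_evenSum (n : ℕ) (b : ℕ → ℕ) :
    (evenSum n b : ℚ) = ∑ i ∈ range (n / 2), (b (2 * i + 2) : ℚ) := by
  simp [evenSum]

def triSum (s : Finset ℕ) (w c : ℕ → ℚ) (u : ℚ) : ℚ := ∑ i ∈ s, w i * tri (u + c i)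

theorem triSum_add_one_add_triSum_sub_one (s : Finset ℕ) (w c : ℕ → ℚ) (u : ℚ) :
    triSum s w c (u + 1) + triSum s w c (u - 1) = 2 * triSum s w c u + ∑ i ∈ s, w i := by
  simp only [triSum, ← sum_add_distrib, mul_sum]
  refine sum_congr rfl fun i _ => ?_
  have := tri_add_one_add_tri_sub_one (u + c i)
  rw [show u + 1 + c i = u + c i + 1 by ring, show u - 1 + c i = u + c i - 1 by ring]
  linear_combination w i * this

theorem cast_sum_mul_brk {s : Finset ℕ} {w f : ℕ → ℕ} {L : ℕ} {u : ℚ} {c : ℕ → ℚ}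
    (hL : ∀ i ∈ s, L ≤ f i) (hf : ∀ i ∈ s, (f i : ℚ) = u + c i) :
    ((∑ i ∈ s, w i * brk (f i) L : ℕ) : ℚ) =
      triSum s (fun i => w i) c u - (∑ i ∈ s, (w i : ℚ)) * tri L := by
  simp only [triSum, Nat.cast_sum, Nat.cast_mul, sum_mul, ← sum_sub_distrib]
  refine sum_congr rfl fun i hi => ?_
  rw [cast_brk (hL i hi), hf i hi]
  ring

/-- `A1` with `x, y, z` and `Δ = x + y + t + e_a + e_b` as independent rational variables
(see `cast_A1`). -/
def A1Q (m n : ℕ) (a b : ℕ → ℕ) (X Y Z D : ℚ) : ℚ :=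
  let oa : ℚ := oddSum m a; let ea : ℚ := evenSum m a
  let ob : ℚ := oddSum n b; let eb : ℚ := evenSum n b
  triSum (range ((m + 1) / 2)) (fun i => a (2 * i + 1))
      (fun i => ∑ j ∈ range i, (a (2 * j + 2) : ℚ)) X +
    Z * tri (X + Y + ea) +
    triSum (range ((n + 1) / 2)) (fun i => b (2 * i + 1))
      (fun i => ea + eb - ∑ j ∈ range i, (b (2 * j + 2) : ℚ)) (X + Y) +
    (triSum (range (m / 2)) (fun i => a (2 * i + 2))
      (fun i => oa + ob - ∑ j ∈ range (i + 1), (a (2 * j + 1) : ℚ)) (D + Y) - ea * tri D) +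
    Z * (tri (D + ob) - tri D) +
    (triSum (range (n / 2)) (fun i => b (2 * i + 2))
      (fun i => ∑ j ∈ range (i + 1), (b (2 * j + 1) : ℚ)) D - eb * tri D)

theorem cast_A1 {x y z t m n : ℕ} {a b : ℕ → ℕ} {X Y Z D : ℚ} (hX : X = x) (hY : Y = y)
    (hZ : Z = z) (hD : D = x + y + t + evenSum m a + evenSum n b) :
    (A1 x y z t m n a b : ℚ) = A1Q m n a b X Y Z D := by
  subst hX hY hZ hD
  simp only [A1, A1Q, Nat.cast_add, Nat.cast_mul]
  rw [cast_sum_mul_brk (fun _ _ => Nat.zero_le _) (fun i _ => by push_cast; rfl),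
    cast_sum_mul_brk (fun _ _ => Nat.zero_le _) (fun i hi => ?castB),
    cast_sum_mul_brk (fun i hi => ?boundA) (fun i hi => ?castA),
    cast_sum_mul_brk (fun _ _ => Nat.le_add_right _ _) (fun i _ => by push_cast; rfl),
    cast_brk (Nat.zero_le _), cast_brk (Nat.le_add_right _ _)]
  -- this step also fixes the shifts left open in `?castA` and `?castB`
  · simp only [← cast_evenSum, tri]
    push_cast
    ring
  case boundA =>
    have := sum_range_le_oddSum a (by rw [mem_range] at hi; omega : i + 1 ≤ (m + 1) / 2)
    omega
  case castA =>
    have := sum_range_le_oddSum a (by rw [mem_range] at hi; omega : i + 1 ≤ (m + 1) / 2)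
    rw [Nat.cast_sub (by omega)]
    push_cast
    ring
  case castB =>
    have := sum_range_le_evenSum b (by rw [mem_range] at hi; omega : i ≤ n / 2)
    rw [Nat.cast_sub (by omega)]
    push_cast
    ring

theorem A1Q_recurrence (m n : ℕ) (a b : ℕ → ℕ) (X Y Z D : ℚ) :
    A1Q m n a b X Y Z D + A1Q m n a b (X - 1) (Y + 1) (Z - 1) (D - 1) =
      A1Q m n a b X (Y + 1) (Z - 1) D + A1Q m n a b (X - 1) Y Z (D - 1) + X + Y - Z + 1 := by
  simp only [A1Q]
  rw [show X - 1 + (Y + 1) = X + Y by ring, show X + (Y + 1) = X + Y + 1 by ring,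
    show X - 1 + Y = X + Y - 1 by ring, show D - 1 + (Y + 1) = D + Y by ring,
    show D + (Y + 1) = D + Y + 1 by ring, show D - 1 + Y = D + Y - 1 by ring]
  have hb := triSum_add_one_add_triSum_sub_one (range ((n + 1) / 2)) (fun i => b (2 * i + 1))
    (fun i => evenSum m a + evenSum n b - ∑ j ∈ range i, (b (2 * j + 2) : ℚ)) (X + Y)
  have ha := triSum_add_one_add_triSum_sub_one (range (m / 2)) (fun i => a (2 * i + 2))
    (fun i => oddSum m a + oddSum n b - ∑ j ∈ range (i + 1), (a (2 * j + 1) : ℚ)) (D + Y)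
  rw [← cast_oddSum] at hb
  rw [← cast_evenSum] at ha
  unfold tri
  linear_combination -hb - ha

/-- The exponent recurrence (8.25):
`A⁽¹⁾_{x,y,z,t} + A⁽¹⁾_{x-1,y+1,z-1,t-1} =
 A⁽¹⁾_{x,y+1,z-1,t-1} + A⁽¹⁾_{x-1,y,z,t} + x + y - z + 1`
for `x, t ≥ 1`, `z ≥ 1`, as an identity of integers. -/
theorem A1_recurrence (x y z t m n : ℕ) (hx : 1 ≤ x) (ht : 1 ≤ t) (hz : 1 ≤ z)
    (a b : ℕ → ℕ) :
    (A1 x y z t m n a b : ℤ) + (A1 (x - 1) (y + 1) (z - 1) (t - 1) m n a b : ℤ) =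
      (A1 x (y + 1) (z - 1) (t - 1) m n a b : ℤ) + (A1 (x - 1) y z t m n a b : ℤ) +
        (x : ℤ) + (y : ℤ) - (z : ℤ) + 1 := by
  obtain ⟨D, hD⟩ : ∃ D : ℚ, D = x + y + t + evenSum m a + evenSum n b := ⟨_, rfl⟩
  have h1 : (A1 x y z t m n a b : ℚ) = A1Q m n a b x y z D := cast_A1 rfl rfl rfl hD
  have h2 : (A1 (x - 1) (y + 1) (z - 1) (t - 1) m n a b : ℚ) =
      A1Q m n a b (x - 1) (y + 1) (z - 1) (D - 1) :=
    cast_A1 (by push_cast [hx]; ring) (by push_cast; ring) (by push_cast [hz]; ring)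
      (by push_cast [hx, ht, hD]; ring)
  have h3 : (A1 x (y + 1) (z - 1) (t - 1) m n a b : ℚ) = A1Q m n a b x (y + 1) (z - 1) D :=
    cast_A1 rfl (by push_cast; ring) (by push_cast [hz]; ring) (by push_cast [ht, hD]; ring)
  have h4 : (A1 (x - 1) y z t m n a b : ℚ) = A1Q m n a b (x - 1) y z (D - 1) :=
    cast_A1 (by push_cast [hx]; ring) rfl rfl (by push_cast [hx, hD]; ring)
  have key := A1Q_recurrence m n a b x y z D
  rw [← h1, ← h2, ← h3, ← h4] at key
  exact_mod_cast key
end
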